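/- Fix an integer m ≥ 2 and p ∈ (0,1). With S = Fin m, Q = Bool × Fin m, the Ising channel P(y|x,s) (1 if x = s = y; 1/2 if x ≠ s and y ∈ {x,s}; 0 otherwise), the test distribution T(y|(1,q_s)) = (1+p)/2 if y = q_s else (1-p)/(2(m-1)) and T(y|(0,q_s)) = 2p/(1+p) if y = q_s else (1-p)/((1+p)(m-1)), the stationary distribution π(s,(1,q_s)) = (2/(m(p+3)))·1[q_s = s], π(s,(0,q_s)) = 2p/(m(p+3)) if q_s = s and (1-p)/(m(m-1)(p+3)) otherwise, and the input distribution u(x|s,(1,s)) = p·1[x=s] + ((1-p)/(m-1))·1[x≠s], u(x|s,(0,q_s)) = 1[x=s] (u arbitrary stochastic at nodes (1,q_s) with q_s ≠ s): the conditional mutual information I(X,S;Y|Q) := Σ_{s,q,x,y} π(s,q)·u(x|s,q)·P(y|x,s)·log₂( P(y|x,s)/T(y|q) ) equals 2·(H₂(p) + (1-p)·log₂(m-1))/(p+3). -/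

import Mathlib

/-- The binary entropy function in bits, with the convention `0 · log₂ 0 = 0`. -/
noncomputable def binEnt (x : ℝ) : ℝ :=
  -x * Real.logb 2 x - (1 - x) * Real.logb 2 (1 - x)

/-- The Ising channel law `P(y|x,s)`. -/
noncomputable def IsingP {m : ℕ} (y x s : Fin m) : ℝ :=
  if x = s then (if y = s then 1 else 0)
  else if y = x ∨ y = s then 1 / 2 else 0

/-- The test distribution `T(y|q)` of the Q-graph for `|X| ≤ 8`. -/
noncomputable def testT (p : ℝ) {m : ℕ} (y : Fin m) (q : Bool × Fin m) : ℝ :=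
  if q.1 then (if y = q.2 then (1 + p) / 2 else (1 - p) / (2 * ((m : ℝ) - 1)))
  else (if y = q.2 then 2 * p / (1 + p) else (1 - p) / ((1 + p) * ((m : ℝ) - 1)))

/-- The stationary distribution `π` on `S × Q`. -/
noncomputable def statDist (p : ℝ) {m : ℕ} (sq : Fin m × (Bool × Fin m)) : ℝ :=
  if sq.2.1 then (if sq.2.2 = sq.1 then 2 / (m * (p + 3)) else 0)
  else (if sq.2.2 = sq.1 then 2 * p / (m * (p + 3))
        else (1 - p) / (m * ((m : ℝ) - 1) * (p + 3)))

/-! At the node `(1, s)` the input puts mass `p` on `x = s` and spreads the rest uniformly, while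
at the nodes `(0, q)` it copies the state, so the rate splits into equal contributions of the
`m` states. The test distribution `T` is tuned so that all `log₂ (1 + p)` terms cancel in each
contribution, leaving `2 (H₂(p) + (1 - p) log₂ (m - 1)) / (m (p + 3))`. -/

open Finset Real

theorem Fintype.sum_ite_eq_add_card_sub_one_mul {α R : Type*} [Fintype α] [DecidableEq α]
    [CommRing R] (s : α) (a b : R) :
    ∑ x, (if x = s then a else b) = a + ((Fintype.card α : R) - 1) * b := by
  have h : ∀ x, (if x = s then a else b) = (if x = s then a - b else 0) + b := by
    intro x; split_ifs <;> ring
  simp only [h, sum_add_distrib, sum_ite_eq', sum_const, card_univ, nsmul_eq_mul]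
  ring

noncomputable def isingRelEntropy {m : ℕ} (t : Fin m → ℝ) (x s : Fin m) : ℝ :=
  ∑ y, IsingP y x s * logb 2 (IsingP y x s / t y)

section isingRelEntropy

variable {m : ℕ} (t : Fin m → ℝ)

theorem isingRelEntropy_self (s : Fin m) : isingRelEntropy t s s = -logb 2 (t s) := by
  simp [isingRelEntropy, IsingP, logb_inv]

theorem isingRelEntropy_of_ne {x s : Fin m} (hxs : x ≠ s) (hx : t x ≠ 0) (hs : t s ≠ 0) :
    isingRelEntropy t x s = -1 - (logb 2 (t x) + logb 2 (t s)) / 2 := by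
  have hterm : ∀ y, IsingP y x s * logb 2 (IsingP y x s / t y)
      = (if y = x then logb 2 (1 / 2 / t x) / 2 else 0)
        + (if y = s then logb 2 (1 / 2 / t s) / 2 else 0) := by
    intro y
    by_cases hyx : y = x
    · subst hyx; simp only [IsingP, hxs, ↓reduceIte, or_false, one_div, add_zero]; ring
    · by_cases hys : y = s
      · subst hys; simp only [IsingP, hxs, ↓reduceIte, hyx, or_true, one_div, zero_add]; ring
      · simp [IsingP, hxs, hyx, hys]
  simp only [isingRelEntropy, hterm, sum_add_distrib, sum_ite_eq', mem_univ, if_true]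
  rw [logb_div one_half_pos.ne' hx, logb_div one_half_pos.ne' hs, one_div, logb_inv,
    logb_self_eq_one one_lt_two]
  ring

end isingRelEntropy

section rate

variable {m : ℕ} {p : ℝ}

theorem testT_ne_zero (hm : 2 ≤ m) (hp : p ∈ Set.Ioo 0 1) (y : Fin m) (q : Bool × Fin m) :
    testT p y q ≠ 0 := by
  obtain ⟨hp0, hp1⟩ := hp
  have h1p : 0 < 1 - p := by linarith
  have hm1 : (0 : ℝ) < m - 1 := sub_pos.mpr (by exact_mod_cast hm)
  unfold testT
  split_ifs <;> positivity

theorem sum_mul_isingRelEntropy_known (hm : 2 ≤ m) (hp : p ∈ Set.Ioo 0 1) (s : Fin m)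
    {u : Fin m → ℝ} (hu : ∀ x, u x = if x = s then p else (1 - p) / ((m : ℝ) - 1)) :
    ∑ x, u x * isingRelEntropy (testT p · (true, s)) x s
      = -p * logb 2 ((1 + p) / 2)
        + (1 - p) *
          (-1 - (logb 2 ((1 - p) / (2 * ((m : ℝ) - 1))) + logb 2 ((1 + p) / 2)) / 2) := by
  have hterm : ∀ x, u x * isingRelEntropy (testT p · (true, s)) x s
      = if x = s then -p * logb 2 ((1 + p) / 2)
        else (1 - p) / ((m : ℝ) - 1) *
          (-1 - (logb 2 ((1 - p) / (2 * ((m : ℝ) - 1))) + logb 2 ((1 + p) / 2)) / 2) := by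
    intro x
    by_cases hxs : x = s
    · subst hxs
      simp [hu, isingRelEntropy_self, testT]
    · rw [hu, isingRelEntropy_of_ne _ hxs (testT_ne_zero hm hp _ _) (testT_ne_zero hm hp _ _)]
      simp [testT, hxs]
  have hm1 : (m : ℝ) - 1 ≠ 0 := (sub_pos.mpr (by exact_mod_cast hm)).ne'
  simp only [hterm, Fintype.sum_ite_eq_add_card_sub_one_mul, Fintype.card_fin]
  field_simp

theorem sum_mul_isingRelEntropy_deterministic (t : Fin m → ℝ) (s : Fin m) {u : Fin m → ℝ}
    (hu : ∀ x, u x = if x = s then 1 else 0) :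
    ∑ x, u x * isingRelEntropy t x s = -logb 2 (t s) := by
  simp [hu, isingRelEntropy_self]

theorem sum_statDist_mul_isingRelEntropy (hm : 2 ≤ m) (hp : p ∈ Set.Ioo 0 1) (s : Fin m)
    {u : Fin m → Bool × Fin m → ℝ}
    (hu_known : ∀ x, u x (true, s) = if x = s then p else (1 - p) / ((m : ℝ) - 1))
    (hu_unknown : ∀ qs x, u x (false, qs) = if x = s then 1 else 0) :
    ∑ q, statDist p (s, q) * ∑ x, u x q * isingRelEntropy (testT p · q) x s
      = 2 * (binEnt p + (1 - p) * logb 2 ((m : ℝ) - 1)) / (p + 3) / m := by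
  obtain ⟨hp0, hp1⟩ := hp
  have hm1 : (0 : ℝ) < m - 1 := sub_pos.mpr (by exact_mod_cast hm)
  have h1p : 0 < 1 + p := by linarith
  have h1mp : 0 < 1 - p := by linarith
  have hknown : statDist p (s, (true, s)) *
      ∑ x, u x (true, s) * isingRelEntropy (testT p · (true, s)) x s
      = 2 / (m * (p + 3)) * (-p * logb 2 ((1 + p) / 2)
        + (1 - p) *
          (-1 - (logb 2 ((1 - p) / (2 * ((m : ℝ) - 1))) + logb 2 ((1 + p) / 2)) / 2)) := by
    rw [sum_mul_isingRelEntropy_known hm ⟨hp0, hp1⟩ s hu_known]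
    simp [statDist]
  have hunknown : ∀ qs, statDist p (s, (false, qs)) *
      ∑ x, u x (false, qs) * isingRelEntropy (testT p · (false, qs)) x s
      = if qs = s then 2 * p / (m * (p + 3)) * -logb 2 (2 * p / (1 + p))
        else (1 - p) / (m * ((m : ℝ) - 1) * (p + 3)) *
          -logb 2 ((1 - p) / ((1 + p) * ((m : ℝ) - 1))) := by
    intro qs
    rw [sum_mul_isingRelEntropy_deterministic _ s (hu_unknown qs)]
    by_cases hqs : qs = s
    · subst hqs; simp [statDist, testT]
    · simp [statDist, testT, hqs, Ne.symm hqs]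
  rw [Fintype.sum_prod_type, Fintype.sum_bool,
    Fintype.sum_eq_single s (fun qs hqs => by simp [statDist, hqs]), hknown]
  simp only [hunknown, Fintype.sum_ite_eq_add_card_sub_one_mul, Fintype.card_fin]
  rw [logb_div h1p.ne' two_ne_zero, logb_div h1mp.ne' (by positivity),
    logb_mul two_ne_zero hm1.ne', logb_div (by positivity) h1p.ne', logb_mul two_ne_zero hp0.ne',
    logb_div h1mp.ne' (by positivity), logb_mul h1p.ne' hm1.ne', logb_self_eq_one one_lt_two,
    binEnt]
  field_simp
  ring

end rate

theorem ising_achievable_rate_general (m : ℕ) (hm : 2 ≤ m) (p : ℝ)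
    (hp : p ∈ Set.Ioo (0 : ℝ) 1)
    (u : Fin m → Fin m → Bool × Fin m → ℝ)
    (hu_known : ∀ s x : Fin m,
      u x s (true, s) = if x = s then p else (1 - p) / ((m : ℝ) - 1))
    (hu_unknown : ∀ (s qs x : Fin m),
      u x s (false, qs) = if x = s then 1 else 0) :
    (∑ s : Fin m, ∑ q : Bool × Fin m, ∑ x : Fin m, ∑ y : Fin m,
        statDist p (s, q) * u x s q * IsingP y x s *
          Real.logb 2 (IsingP y x s / testT p y q))
      = 2 * (binEnt p + (1 - p) * Real.logb 2 ((m : ℝ) - 1)) / (p + 3) := by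
  have hm0 : (m : ℝ) ≠ 0 := by positivity
  simp only [mul_assoc, ← mul_sum]
  change ∑ s, ∑ q, statDist p (s, q) * ∑ x, u x s q * isingRelEntropy (testT p · q) x s = _
  simp only [fun s => sum_statDist_mul_isingRelEntropy hm hp s (hu_known s) (hu_unknown s),
    sum_const, card_univ, Fintype.card_fin, nsmul_eq_mul]
  field_simp

/-- achievable rate, Lemma 2 of the paper: with the stationary
distribution `π`, the input distribution `u` as specified, the Ising channel `P`
and the test distribution `T`, the conditional mutual information
`I(X,S;Y|Q) = Σ_{s,q,x,y} π(s,q)u(x|s,q)P(y|x,s)log₂(P(y|x,s)/T(y|q))` equals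
`2(H₂(p) + (1-p)log₂(m-1))/(p+3)` (convention `0·log₂(0/t) = 0`). -/
theorem ising_achievable_rate (m : ℕ) (hm : 2 ≤ m) (p : ℝ)
    (hp : p ∈ Set.Ioo (0 : ℝ) 1)
    (u : Fin m → Fin m → Bool × Fin m → ℝ)
    (hu_nonneg : ∀ x s q, 0 ≤ u x s q)
    (hu_sum : ∀ s q, ∑ x : Fin m, u x s q = 1)
    (hu_known : ∀ s x : Fin m,
      u x s (true, s) = if x = s then p else (1 - p) / ((m : ℝ) - 1))
    (hu_unknown : ∀ (s qs x : Fin m),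
      u x s (false, qs) = if x = s then 1 else 0) :
    (∑ s : Fin m, ∑ q : Bool × Fin m, ∑ x : Fin m, ∑ y : Fin m,
        statDist p (s, q) * u x s q * IsingP y x s *
          Real.logb 2 (IsingP y x s / testT p y q))
      = 2 * (binEnt p + (1 - p) * Real.logb 2 ((m : ℝ) - 1)) / (p + 3) :=
  ising_achievable_rate_general m hm p hp u hu_known hu_unknown
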